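/- arXiv:1404.3417 — 2 statements merged into one kernel-verified Lean document; each statement's English description precedes it below -/
import Mathlib

section
/- Let X and Y be co-absolute topological spaces, i.e., there exist a topological space Z and closed irreducible continuous surjections θ_X : Z → X and θ_Y : Z → Y. If X is I-favorable, then Y is I-favorable. -/
/-- A topological space `X` is I-favorable if there is a strategy `σ` assigning to each
finite (possibly empty) sequence of open subsets of `X` an open subset of `X` such that
whenever `B₀, B₁, …` are nonempty open sets with `B₀ ⊆ σ ∅` and `B_{k+1} ⊆ σ (B₀,…,B_k)`,
the union `⋃ k, B k` is dense in `X`. (For the empty space the nonemptiness requirement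
on the values of `σ` is vacuous.) -/
def IFavorable (X : Type*) [TopologicalSpace X] : Prop :=
  ∃ σ : List (Set X) → Set X,
    (∀ l, IsOpen (σ l)) ∧
    (∀ l, Nonempty X → (σ l).Nonempty) ∧
    ∀ B : ℕ → Set X, (∀ k, IsOpen (B k)) → (∀ k, (B k).Nonempty) →
      B 0 ⊆ σ [] →
      (∀ k, B (k + 1) ⊆ σ (List.ofFn fun i : Fin (k + 1) => B i)) →
      Dense (⋃ k, B k)

/-- `f : X → Y` is a closed irreducible continuous surjection: it is continuous, closed,
surjective, and `f '' F ≠ Y` for every proper closed subset `F ⊊ X`. -/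
def ClosedIrreducibleSurjection {X Y : Type*} [TopologicalSpace X] [TopologicalSpace Y]
    (f : X → Y) : Prop :=
  Continuous f ∧ IsClosedMap f ∧ Function.Surjective f ∧
    ∀ F : Set X, IsClosed F → F ≠ Set.univ → f '' F ≠ Set.univ

/-!
A strategy for `X` is pulled back to `Y` through the common preimage `Z`. A nonempty open
set `B ⊆ Y` is sent to the kernel image `θX^♯ (θY⁻¹ B) = {x | θX⁻¹ x ⊆ θY⁻¹ B}` in `X`, which
is open because `θX` is closed and nonempty because `θX` is irreducible; answers `U` of the
strategy on `X` are sent back to `Y` the same way with the roles of `θX` and `θY` exchanged.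
Adjointness of preimage and kernel image keeps the transported play legal, and a dense union
of the sets played in `X` has a dense preimage in `Z` (again by irreducibility), whose image
under `θY` is dense in `Y` and contained in the union of the sets played in `Y`.
-/

open Set

/-- Transport of I-favorability along maps `φ : Set Y → Set X`, `ψ : Set X → Set Y` on open
sets: `ψ` translates answers of a strategy on `X` into answers on `Y`, and `φ` translates the
moves on `Y` back into legal moves on `X`. -/
theorem IFavorable.of_transfer {X Y : Type*} [TopologicalSpace X] [TopologicalSpace Y]
    (φ : Set Y → Set X) (ψ : Set X → Set Y)
    (hφ_open : ∀ B, IsOpen B → IsOpen (φ B))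
    (hφ_nonempty : ∀ B, IsOpen B → B.Nonempty → (φ B).Nonempty)
    (hψ_open : ∀ U, IsOpen U → IsOpen (ψ U))
    (hψ_nonempty : ∀ U, IsOpen U → U.Nonempty → (ψ U).Nonempty)
    (hφψ : ∀ B U, B ⊆ ψ U → φ B ⊆ U)
    (hdense : ∀ B : ℕ → Set Y, Dense (⋃ k, φ (B k)) → Dense (⋃ k, B k))
    (h : IFavorable X) : IFavorable Y := by
  obtain ⟨σ, hσ_open, hσ_nonempty, hσ⟩ := h
  refine ⟨fun l => ψ (σ (l.map φ)), fun l => hψ_open _ (hσ_open _), ?_, ?_⟩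
  · rintro l ⟨y⟩
    obtain ⟨x, -⟩ := hφ_nonempty univ isOpen_univ ⟨y, trivial⟩
    exact hψ_nonempty _ (hσ_open _) (hσ_nonempty _ ⟨x⟩)
  · intro B hB_open hB_nonempty hB0 hB_succ
    refine hdense B (hσ (fun k => φ (B k)) (fun k => hφ_open _ (hB_open k))
      (fun k => hφ_nonempty _ (hB_open k) (hB_nonempty k)) (hφψ _ _ hB0) fun k => ?_)
    simpa only [List.map_ofFn, Function.comp_def] using hφψ _ _ (hB_succ k)

namespace ClosedIrreducibleSurjection

variable {Z X : Type*} [TopologicalSpace Z] [TopologicalSpace X] {f : Z → X}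

lemma kernImage_nonempty (hf : ClosedIrreducibleSurjection f) {U : Set Z} (hU : IsOpen U)
    (hne : U.Nonempty) : (kernImage f U).Nonempty := by
  rw [kernImage_eq_compl, nonempty_compl]
  exact hf.2.2.2 Uᶜ hU.isClosed_compl (compl_ne_univ.2 hne)

lemma dense_preimage (hf : ClosedIrreducibleSurjection f) {W : Set X} (hW : Dense W) :
    Dense (f ⁻¹' W) := by
  by_contra hnd
  -- `f` maps the proper closed set `closure (f ⁻¹' W)` onto a closed set containing `W`.
  refine hf.2.2.2 _ isClosed_closure (mt dense_iff_closure_eq.2 hnd) (eq_univ_of_univ_subset ?_)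
  rw [← hW.closure_eq]
  refine (hf.2.1 _ isClosed_closure).closure_subset_iff.2 fun x hx => ?_
  obtain ⟨z, rfl⟩ := hf.2.2.1 x
  exact ⟨z, subset_closure hx, rfl⟩

end ClosedIrreducibleSurjection

/-- If `X` and `Y` are co-absolute (there are a space `Z` and closed
irreducible continuous surjections `Z → X` and `Z → Y`) and `X` is I-favorable, then
`Y` is I-favorable. -/
theorem ifavorable_of_coabsolute {X Y Z : Type*}
    [TopologicalSpace X] [TopologicalSpace Y] [TopologicalSpace Z]
    (θX : Z → X) (θY : Z → Y)
    (hX : ClosedIrreducibleSurjection θX) (hY : ClosedIrreducibleSurjection θY)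
    (h : IFavorable X) : IFavorable Y := by
  refine h.of_transfer (fun B => kernImage θX (θY ⁻¹' B)) (fun U => kernImage θY (θX ⁻¹' U))
    (fun B hB => isClosedMap_iff_kernImage.1 hX.2.1 (hB.preimage hY.1))
    (fun B hB hne => hX.kernImage_nonempty (hB.preimage hY.1) (hne.preimage hY.2.2.1))
    (fun U hU => isClosedMap_iff_kernImage.1 hY.2.1 (hU.preimage hX.1))
    (fun U hU hne => hY.kernImage_nonempty (hU.preimage hX.1) (hne.preimage hX.2.2.1))
    (fun B U hBU => ?_) (fun B hB => ?_)
  · calc kernImage θX (θY ⁻¹' B) ⊆ kernImage θX (θX ⁻¹' U) :=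
          kernImage_mono (subset_kernImage_iff.1 hBU)
      _ = U := kernImage_preimage_eq_iff.2 (by simp [hX.2.2.1.range_eq])
  · have hZ : θX ⁻¹' (⋃ k, kernImage θX (θY ⁻¹' B k)) ⊆ θY ⁻¹' (⋃ k, B k) := by
      simp only [preimage_iUnion]
      exact iUnion_mono fun k => subset_kernImage_iff.1 subset_rfl
    have hZ_dense : Dense (θY ⁻¹' ⋃ k, B k) := (hX.dense_preimage hB).mono hZ
    exact (hY.2.2.1.denseRange.dense_image hY.1 hZ_dense).mono (image_preimage_subset θY _)
end

section
/- Let φ : X → Z be a continuous surjection of compact Hausdorff spaces, and let λφ : λX → λZ be the induced map defined by λφ(ξ) = {A ⊆ Z closed : φ(F) ⊆ A for some F ∈ ξ}. If λφ is skeletal, then φ is skeletal. -/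
universe u

/-- A maximal linked system on `X`: a family of nonempty closed subsets of `X`, any two
members of which intersect, which is maximal among such families (any nonempty closed set
meeting every member already belongs to the family). -/
structure MaxLinked (X : Type u) [TopologicalSpace X] where
  sets : Set (Set X)
  isClosed' : ∀ F ∈ sets, IsClosed F
  nonempty' : ∀ F ∈ sets, F.Nonempty
  linked' : ∀ F ∈ sets, ∀ G ∈ sets, (F ∩ G).Nonempty
  maximal' : ∀ F : Set X, IsClosed F → F.Nonempty →
    (∀ G ∈ sets, (F ∩ G).Nonempty) → F ∈ sets

/-- For `H ⊆ X`, the set `H⁺ = {ξ ∈ λX : F ⊆ H for some F ∈ ξ}`. -/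
def MaxLinked.plus {X : Type u} [TopologicalSpace X] (H : Set X) : Set (MaxLinked X) :=
  {ξ | ∃ F ∈ ξ.sets, F ⊆ H}

/-- The superextension topology on `λX`: generated by the sets `U⁺` with `U` open in `X`
(finite intersections `[U₁⁺, …, U_k⁺]` of such sets form a base). -/
instance MaxLinked.instTopologicalSpace (X : Type u) [TopologicalSpace X] :
    TopologicalSpace (MaxLinked X) :=
  TopologicalSpace.generateFrom {S | ∃ U : Set X, IsOpen U ∧ S = MaxLinked.plus U}

/-- A continuous map `f : X → Y` is skeletal if for every nonempty open `U ⊆ X`,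
the interior in `Y` of the closure in `Y` of `f '' U` is nonempty. -/
def Skeletal {X Y : Type*} [TopologicalSpace X] [TopologicalSpace Y] (f : X → Y) : Prop :=
  ∀ U : Set X, IsOpen U → U.Nonempty → (interior (closure (f '' U))).Nonempty

/-- The induced map `λφ : λX → λZ` of a continuous surjection `φ : X → Z` of compact
Hausdorff spaces, defined by `λφ ξ = {A ⊆ Z closed : φ(F) ⊆ A for some F ∈ ξ}`. -/
def lambdaMap {X Z : Type u} [TopologicalSpace X] [TopologicalSpace Z]
    [CompactSpace X] [T2Space Z] (φ : X → Z) (hc : Continuous φ)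
    (hs : Function.Surjective φ) (ξ : MaxLinked X) : MaxLinked Z where
  sets := {A : Set Z | IsClosed A ∧ ∃ F ∈ ξ.sets, φ '' F ⊆ A}
  isClosed' := fun _ hA => hA.1
  nonempty' := by
    rintro A ⟨-, F, hF, hFA⟩
    obtain ⟨x, hx⟩ := ξ.nonempty' F hF
    exact ⟨φ x, hFA ⟨x, hx, rfl⟩⟩
  linked' := by
    rintro A ⟨-, F, hF, hFA⟩ A' ⟨-, F', hF', hFA'⟩
    obtain ⟨x, hxF, hxF'⟩ := ξ.linked' F hF F' hF'
    exact ⟨φ x, hFA ⟨x, hxF, rfl⟩, hFA' ⟨x, hxF', rfl⟩⟩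
  maximal' := by
    intro A hAcl hAne hmeets
    have hpre : φ ⁻¹' A ∈ ξ.sets := by
      apply ξ.maximal' _ (hAcl.preimage hc)
      · obtain ⟨z, hz⟩ := hAne
        obtain ⟨x, rfl⟩ := hs z
        exact ⟨x, hz⟩
      · intro G hG
        have himg : (φ '' G) ∈ {A : Set Z | IsClosed A ∧ ∃ F ∈ ξ.sets, φ '' F ⊆ A} :=
          ⟨((ξ.isClosed' G hG).isCompact.image hc).isClosed, G, hG, subset_rfl⟩
        obtain ⟨z, hzA, x, hxG, rfl⟩ := hmeets _ himg
        exact ⟨x, hzA, hxG⟩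
    exact ⟨hAcl, φ ⁻¹' A, hpre, Set.image_preimage_subset φ A⟩

/-!
`λφ` maps `U⁺` into `C⁺`, where `C` is the closure of `φ(U)`, and `C⁺` is closed in `λZ`. If `C`
had empty interior, so would `C⁺`: if a basic open set `V₁⁺ ∩ ⋯ ∩ V_k⁺` is nonempty, the `V_i`
pairwise meet, so one can pick points `z_ij ∈ V_i ∩ V_j` off `C`. The finite sets
`G_i = {z_ij, z_ji : j}` are pairwise linked, and a maximal linked system containing all of them
lies in every `V_i⁺` but has members disjoint from `C`, so it is not in `C⁺`. Hence
`int cl λφ(U⁺) ⊆ int C⁺ = ∅`, although `U⁺` is a nonempty open set.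
-/

open Set

namespace MaxLinked

variable {Y : Type u} [TopologicalSpace Y]

theorem exists_subset_sets {L : Set (Set Y)} (hcl : ∀ F ∈ L, IsClosed F)
    (hlinked : ∀ F ∈ L, ∀ G ∈ L, (F ∩ G).Nonempty) : ∃ ξ : MaxLinked Y, L ⊆ ξ.sets := by
  let S : Set (Set (Set Y)) :=
    {M | (∀ F ∈ M, IsClosed F) ∧ ∀ F ∈ M, ∀ G ∈ M, (F ∩ G).Nonempty}
  have hchain : ∀ c ⊆ S, IsChain (· ⊆ ·) c → c.Nonempty → ∃ ub ∈ S, ∀ M ∈ c, M ⊆ ub := by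
    intro c hcS hc _
    refine ⟨⋃₀ c, ⟨?_, ?_⟩, fun M hM => subset_sUnion_of_mem hM⟩
    · rintro F ⟨M, hM, hFM⟩
      exact (hcS hM).1 F hFM
    · rintro F ⟨M, hM, hFM⟩ G ⟨M', hM', hGM'⟩
      rcases hc.total hM hM' with hMM' | hM'M
      · exact (hcS hM').2 F (hMM' hFM) G hGM'
      · exact (hcS hM).2 F hFM G (hM'M hGM')
  obtain ⟨M, hLM, ⟨hMcl, hMlinked⟩, hMmax⟩ := zorn_subset_nonempty S hchain L ⟨hcl, hlinked⟩
  refine ⟨⟨M, hMcl, fun F hF => by simpa using hMlinked F hF F hF, hMlinked, ?_⟩, hLM⟩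
  intro F hF hFne hmeets
  refine hMmax ⟨?_, ?_⟩ (subset_insert F M) (mem_insert F M)
  · rintro G (rfl | hG)
    exacts [hF, hMcl G hG]
  · rintro G (rfl | hG) G' (rfl | hG')
    · simpa using hFne
    · exact hmeets G' hG'
    · exact inter_comm G G' ▸ hmeets G hG
    · exact hMlinked G hG G' hG'

theorem mem_sets_of_forall_inter_nonempty [Nonempty Y] (ξ : MaxLinked Y) {F : Set Y}
    (hF : IsClosed F) (hmeets : ∀ G ∈ ξ.sets, (F ∩ G).Nonempty) : F ∈ ξ.sets := by
  have huniv : univ ∈ ξ.sets :=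
    ξ.maximal' _ isClosed_univ univ_nonempty fun G hG => by simpa using ξ.nonempty' G hG
  exact ξ.maximal' F hF (by simpa using hmeets _ huniv) hmeets

def principal [T1Space Y] (y : Y) : MaxLinked Y where
  sets := {F | IsClosed F ∧ y ∈ F}
  isClosed' _ hF := hF.1
  nonempty' _ hF := ⟨y, hF.2⟩
  linked' _ hF _ hG := ⟨y, hF.2, hG.2⟩
  maximal' F hF _ hmeets := by
    obtain ⟨_, hyF, rfl⟩ := hmeets {y} ⟨isClosed_singleton, rfl⟩
    exact ⟨hF, hyF⟩

theorem principal_mem_plus [T1Space Y] {y : Y} {H : Set Y} (hy : y ∈ H) :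
    principal y ∈ plus H :=
  ⟨{y}, ⟨isClosed_singleton, rfl⟩, singleton_subset_iff.2 hy⟩

theorem plus_mono {A B : Set Y} (hAB : A ⊆ B) : plus A ⊆ plus B :=
  fun _ ⟨F, hF, hFA⟩ => ⟨F, hF, hFA.trans hAB⟩

theorem inter_nonempty_of_mem_plus {ξ : MaxLinked Y} {A B : Set Y} (hA : ξ ∈ plus A)
    (hB : ξ ∈ plus B) : (A ∩ B).Nonempty := by
  obtain ⟨F, hF, hFA⟩ := hA
  obtain ⟨G, hG, hGB⟩ := hB
  exact (ξ.linked' F hF G hG).mono (inter_subset_inter hFA hGB)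

theorem disjoint_plus_plus_compl (C : Set Y) : Disjoint (plus C) (plus Cᶜ) :=
  disjoint_left.2 fun _ hC hCc => by simpa using inter_nonempty_of_mem_plus hC hCc

theorem compl_plus [Nonempty Y] {C : Set Y} (hC : IsClosed C) : (plus C)ᶜ = plus Cᶜ := by
  refine Subset.antisymm (fun ξ hξ => ?_) (disjoint_plus_plus_compl C).subset_compl_left
  by_contra hξc
  refine hξ ⟨C, ξ.mem_sets_of_forall_inter_nonempty hC fun G hG => ?_, subset_rfl⟩
  by_contra hCG
  exact hξc ⟨G, hG, fun y hyG hyC => hCG ⟨y, hyC, hyG⟩⟩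

theorem isOpen_plus {U : Set Y} (hU : IsOpen U) : IsOpen (plus U) :=
  TopologicalSpace.GenerateOpen.basic _ ⟨U, hU, rfl⟩

theorem isClosed_plus [Nonempty Y] {C : Set Y} (hC : IsClosed C) : IsClosed (plus C) := by
  rw [← isOpen_compl_iff, compl_plus hC]
  exact isOpen_plus hC.isOpen_compl

theorem exists_forall_mem_plus_inter [T1Space Y] {ι : Type*} [Finite ι] {V : ι → Set Y}
    (hV : ∀ i, IsOpen (V i)) (hVlinked : ∀ i j, (V i ∩ V j).Nonempty) {D : Set Y}
    (hD : Dense D) : ∃ ξ : MaxLinked Y, ∀ i, ξ ∈ plus (V i ∩ D) := by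
  choose z hz using fun i j => hD.inter_open_nonempty _ ((hV i).inter (hV j)) (hVlinked i j)
  let G i := range (z i) ∪ range (z · i)
  obtain ⟨ξ, hξ⟩ := exists_subset_sets (L := range G)
    (by rintro _ ⟨i, rfl⟩; exact ((finite_range _).union (finite_range _)).isClosed)
    (by rintro _ ⟨i, rfl⟩ _ ⟨j, rfl⟩; exact ⟨z i j, Or.inl ⟨j, rfl⟩, Or.inr ⟨i, rfl⟩⟩)
  refine ⟨ξ, fun i => ⟨G i, hξ ⟨i, rfl⟩, ?_⟩⟩
  rintro _ (⟨j, rfl⟩ | ⟨j, rfl⟩)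
  exacts [⟨(hz i j).1.1, (hz i j).2⟩, ⟨(hz j i).1.2, (hz j i).2⟩]

theorem dense_plus [T1Space Y] [Nonempty Y] {D : Set Y} (hD : Dense D) : Dense (plus D) := by
  rw [(TopologicalSpace.isTopologicalBasis_of_subbasis rfl).dense_iff]
  rintro _ ⟨f, ⟨hf, hfsub⟩, rfl⟩ ⟨ξ, hξ⟩
  choose V hV hfV using fun S : f => hfsub S.2
  rcases isEmpty_or_nonempty f with hfe | ⟨⟨S₀⟩⟩
  · obtain ⟨y, hy⟩ := hD.nonempty
    exact ⟨principal y, fun S hS => (hfe.false ⟨S, hS⟩).elim, principal_mem_plus hy⟩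
  have : Finite f := hf
  have hVlinked (S T : f) : (V S ∩ V T).Nonempty :=
    inter_nonempty_of_mem_plus (hfV S ▸ hξ S S.2) (hfV T ▸ hξ T T.2)
  obtain ⟨ξ', hξ'⟩ := exists_forall_mem_plus_inter hV hVlinked hD
  refine ⟨ξ', fun S hS => ?_, plus_mono inter_subset_right (hξ' S₀)⟩
  rw [show S = plus (V ⟨S, hS⟩) from hfV ⟨S, hS⟩]
  exact plus_mono inter_subset_left (hξ' ⟨S, hS⟩)

theorem interior_plus_eq_empty [T1Space Y] [Nonempty Y] {C : Set Y} (hC : interior C = ∅) :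
    interior (plus C) = ∅ :=
  subset_empty_iff.1 <| (interior_mono (disjoint_plus_plus_compl C).subset_compl_right).trans
    (dense_plus (interior_eq_empty_iff_dense_compl.1 hC)).interior_compl.subset

end MaxLinked

open MaxLinked

theorem mapsTo_lambdaMap_plus {X Z : Type u} [TopologicalSpace X] [TopologicalSpace Z]
    [CompactSpace X] [T2Space Z] (φ : X → Z) (hc : Continuous φ)
    (hs : Function.Surjective φ) (U : Set X) :
    MapsTo (lambdaMap φ hc hs) (plus U) (plus (closure (φ '' U))) := by
  rintro ξ ⟨F, hF, hFU⟩
  exact ⟨_, ⟨isClosed_closure, F, hF, (image_mono hFU).trans subset_closure⟩, subset_rfl⟩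

theorem skeletal_of_lambdaMap_skeletal_general {X Z : Type u}
    [TopologicalSpace X] [CompactSpace X] [T2Space X]
    [TopologicalSpace Z] [T2Space Z]
    (φ : X → Z) (hc : Continuous φ) (hs : Function.Surjective φ)
    (h : Skeletal (lambdaMap φ hc hs)) : Skeletal φ := by
  rintro U hU ⟨x, hx⟩
  have : Nonempty Z := ⟨φ x⟩
  by_contra hC
  obtain ⟨ξ, hξ⟩ := h (plus U) (isOpen_plus hU) ⟨principal x, principal_mem_plus hx⟩
  have hsub : closure (lambdaMap φ hc hs '' plus U) ⊆ plus (closure (φ '' U)) :=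
    closure_minimal (mapsTo_lambdaMap_plus φ hc hs U).image_subset
      (isClosed_plus isClosed_closure)
  simpa [interior_plus_eq_empty (not_nonempty_iff_eq_empty.1 hC)] using interior_mono hsub hξ

/-- For a continuous surjection `φ : X → Z` of compact Hausdorff spaces,
if the induced map `λφ : λX → λZ` is skeletal, then `φ` is skeletal. -/
theorem skeletal_of_lambdaMap_skeletal {X Z : Type u}
    [TopologicalSpace X] [CompactSpace X] [T2Space X]
    [TopologicalSpace Z] [CompactSpace Z] [T2Space Z]
    (φ : X → Z) (hc : Continuous φ) (hs : Function.Surjective φ)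
    (h : Skeletal (lambdaMap φ hc hs)) : Skeletal φ :=
  skeletal_of_lambdaMap_skeletal_general φ hc hs h
end
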